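/- Let X = {0,1}^{d−1} × {0} ⊂ ℝ^d, and let x' = (a,…,a,b) ∈ ℝ^d where 0 < a < 1. Then for any two distinct points y, z ∈ X with y ≠ 0 and z ≠ 0, the inner product satisfies ⟨y − x', z − x'⟩ > b² − (d−1)·a. In particular, if b² ≥ (d−1)·a then the angle at x' in the triangle y x' z is acute. -/

import Mathlib

/-! Coordinatewise, `⟪y - x', z - x'⟫` has the term `b²` in the last coordinate and, in each of
the other `d - 1` coordinates, a term `(u - a)(v - a)` with `u, v ∈ {0,1}`, which exceeds `-a`
(it is `a²`, `a² - a` or `(1 - a)²`). Since `d ≥ 2` there is at least one such coordinate, so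
the bound is strict; a positive inner product makes the angle acute. -/

open scoped InnerProductSpace

/-- The vertex set `{0,1}^(d-1) × {0}` of the `(d-1)`-dimensional unit hypercube
embedded in `ℝ^d` with last coordinate `0`. -/
def hypercube (d : ℕ) : Set (EuclideanSpace ℝ (Fin d)) :=
  {v | ∀ i : Fin d, if (i : ℕ) = d - 1 then v i = 0 else v i = 0 ∨ v i = 1}

lemma neg_lt_sub_mul_sub_of_zero_or_one {a u v : ℝ} (ha : 0 < a)
    (hu : u = 0 ∨ u = 1) (hv : v = 0 ∨ v = 1) : -a < (u - a) * (v - a) := by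
  rcases hu with rfl | rfl <;> rcases hv with rfl | rfl <;> nlinarith

lemma InnerProductGeometry.angle_lt_pi_div_two_of_inner_pos {V : Type*}
    [NormedAddCommGroup V] [InnerProductSpace ℝ V] {x y : V} (h : 0 < ⟪x, y⟫_ℝ) :
    InnerProductGeometry.angle x y < Real.pi / 2 := by
  have hx : x ≠ 0 := by rintro rfl; simp at h
  have hy : y ≠ 0 := by rintro rfl; simp at h
  rw [InnerProductGeometry.angle, Real.arccos_lt_pi_div_two]
  exact div_pos h (mul_pos (norm_pos_iff.mpr hx) (norm_pos_iff.mpr hy))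

lemma EuclideanGeometry.angle_lt_pi_div_two_of_inner_pos {V P : Type*}
    [NormedAddCommGroup V] [InnerProductSpace ℝ V] [MetricSpace P] [NormedAddTorsor V P]
    {p₁ p₂ p₃ : P} (h : 0 < ⟪p₁ -ᵥ p₂, p₃ -ᵥ p₂⟫_ℝ) :
    EuclideanGeometry.angle p₁ p₂ p₃ < Real.pi / 2 :=
  InnerProductGeometry.angle_lt_pi_div_two_of_inner_pos h

lemma Finset.add_card_sub_one_mul_lt_sum {ι : Type*} [Fintype ι] [DecidableEq ι]
    {f : ι → ℝ} {c : ι} {m : ℝ} (hne : (Finset.univ.erase c).Nonempty)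
    (hf : ∀ i ≠ c, m < f i) :
    f c + ((Fintype.card ι : ℝ) - 1) * m < ∑ i, f i := by
  rw [← Finset.add_sum_erase _ _ (Finset.mem_univ c)]
  have hlt : ∑ _i ∈ Finset.univ.erase c, m < ∑ i ∈ Finset.univ.erase c, f i :=
    Finset.sum_lt_sum_of_nonempty hne fun i hi => hf i (Finset.ne_of_mem_erase hi)
  have hcard : ((Finset.univ.erase c).card : ℝ) = (Fintype.card ι : ℝ) - 1 := by
    rw [Finset.card_erase_of_mem (Finset.mem_univ c), Finset.card_univ,
      Nat.cast_pred (Fintype.card_pos_iff.mpr ⟨c⟩)]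
  rw [Finset.sum_const, nsmul_eq_mul, hcard] at hlt
  linarith

lemma inner_sub_sub_hypercube_gt {d : ℕ} (hd : 2 ≤ d) {a b : ℝ} (ha : 0 < a)
    {x' : EuclideanSpace ℝ (Fin d)} (hx' : ∀ i : Fin d, x' i = if (i : ℕ) = d - 1 then b else a)
    {y z : EuclideanSpace ℝ (Fin d)} (hy : y ∈ hypercube d) (hz : z ∈ hypercube d) :
    b ^ 2 - ((d : ℝ) - 1) * a < ⟪y - x', z - x'⟫_ℝ := by
  set c : Fin d := ⟨d - 1, by omega⟩
  have hinner : ⟪y - x', z - x'⟫_ℝ = ∑ i, (y i - x' i) * (z i - x' i) := by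
    simp [PiLp.inner_apply, mul_comm]
  have hlast : (y c - x' c) * (z c - x' c) = b ^ 2 := by
    have hyc := hy c
    have hzc := hz c
    simp only [c, if_true] at hyc hzc
    simp [c, hx', hyc, hzc, sq]
  have hother : ∀ i ≠ c, -a < (y i - x' i) * (z i - x' i) := by
    intro i hi
    have hi' : (i : ℕ) ≠ d - 1 := fun h => hi (Fin.ext h)
    have hyi := hy i
    have hzi := hz i
    rw [if_neg hi'] at hyi hzi
    rw [hx', if_neg hi']
    exact neg_lt_sub_mul_sub_of_zero_or_one ha hyi hzi
  have hne : (Finset.univ.erase c).Nonempty :=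
    ⟨⟨0, by omega⟩, Finset.mem_erase.mpr ⟨fun h => by simp [c] at h; omega,
      Finset.mem_univ _⟩⟩
  have hsum := Finset.add_card_sub_one_mul_lt_sum hne hother
  rw [hlast, Fintype.card_fin] at hsum
  rw [hinner]
  linarith

theorem inner_at_perturbed_vertex_lower_bound_general (d : ℕ) (hd : 2 ≤ d) (a b : ℝ)
    (ha : 0 < a)
    (x' : EuclideanSpace ℝ (Fin d))
    (hx' : ∀ i : Fin d, x' i = if (i : ℕ) = d - 1 then b else a) :
    ∀ y ∈ hypercube d, ∀ z ∈ hypercube d, y ≠ 0 → z ≠ 0 → y ≠ z →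
      b ^ 2 - ((d : ℝ) - 1) * a < ⟪y - x', z - x'⟫_ℝ ∧
      (((d : ℝ) - 1) * a ≤ b ^ 2 →
        EuclideanGeometry.angle y x' z < Real.pi / 2) := by
  intro y hy z hz _ _ _
  have hgt := inner_sub_sub_hypercube_gt hd ha hx' hy hz
  refine ⟨hgt, fun hba => EuclideanGeometry.angle_lt_pi_div_two_of_inner_pos ?_⟩
  rw [vsub_eq_sub, vsub_eq_sub]
  linarith

/-- Let `x' = (a,…,a,b) ∈ ℝ^d` with `0 < a < 1`.  For any two distinct nonzero vertices
`y, z` of the hypercube `X = {0,1}^(d-1) × {0}` one has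
`⟪y - x', z - x'⟫ > b² - (d-1)·a`; in particular, if `b² ≥ (d-1)·a` then the angle at
`x'` in the triangle `y x' z` is acute. -/
theorem inner_at_perturbed_vertex_lower_bound (d : ℕ) (hd : 2 ≤ d) (a b : ℝ)
    (ha : 0 < a) (ha1 : a < 1)
    (x' : EuclideanSpace ℝ (Fin d))
    (hx' : ∀ i : Fin d, x' i = if (i : ℕ) = d - 1 then b else a) :
    ∀ y ∈ hypercube d, ∀ z ∈ hypercube d, y ≠ 0 → z ≠ 0 → y ≠ z →
      b ^ 2 - ((d : ℝ) - 1) * a < ⟪y - x', z - x'⟫_ℝ ∧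
      (((d : ℝ) - 1) * a ≤ b ^ 2 →
        EuclideanGeometry.angle y x' z < Real.pi / 2) :=
  inner_at_perturbed_vertex_lower_bound_general d hd a b ha x' hx'
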